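/- arXiv:2108.08605 — 9 statements merged into one kernel-verified Lean document; each statement's English description precedes it below -/
import Mathlib

section
/- Let q be a positive integer, m : Fin q → ℕ with each m j > 0, n = ∏ j, m j, G = ∀ j : Fin q, ZMod (m j), and φ : Matrix G G ℂ with φ s t = ∏ j, exp(2π·I·(s j).val·(t j).val / m j). For a matrix K : Matrix G G ℂ, let k : G → ℂ be its first column, k i = K i 0. Then K is a q-level circulant matrix (i.e., there exists c : G → ℂ with K = Matrix.circulant c, meaning K i j = c (i − j)) if and only if K = (n : ℂ)⁻¹ • (φᴴ * Matrix.diagonal (φ.mulVec k) * φ). -/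
open Complex Matrix

private lemma exp_congr_mod (M : ℕ) [NeZero M] (s : ℕ) {c d : ℕ} (h : c % M = d % M) :
    Complex.exp (2 * Real.pi * Complex.I * s * c / M) =
      Complex.exp (2 * Real.pi * Complex.I * s * d / M) := by
  obtain ⟨z, hz⟩ : (M : ℤ) ∣ (d : ℤ) - c := Nat.modEq_iff_dvd.mp h
  have hM : (M : ℂ) ≠ 0 := Nat.cast_ne_zero.mpr (NeZero.ne M)
  rw [Complex.exp_eq_exp_iff_exists_int]
  refine ⟨-(s * z), ?_⟩
  have hc : (c : ℂ) = d - M * z := by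
    have : (c : ℤ) = d - M * z := by linarith
    exact_mod_cast congrArg (Int.cast : ℤ → ℂ) this
  rw [hc]
  push_cast
  field_simp
  ring

private lemma sum_exp_zmod (M : ℕ) [NeZero M] (x : ZMod M) :
    ∑ s : ZMod M, Complex.exp (2 * Real.pi * Complex.I * (s : ZMod M).val * x.val / M) =
      if x = 0 then (M : ℂ) else 0 := by
  have hM : (M : ℂ) ≠ 0 := Nat.cast_ne_zero.mpr (NeZero.ne M)
  set ω : ℂ := Complex.exp (2 * Real.pi * Complex.I * x.val / M) with hω
  have hterm : ∀ s : ZMod M,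
      Complex.exp (2 * Real.pi * Complex.I * s.val * x.val / M) = ω ^ s.val := by
    intro s
    rw [hω, ← Complex.exp_nat_mul]
    congr 1
    field_simp
  have hsum : ∑ s : ZMod M, Complex.exp (2 * Real.pi * Complex.I * s.val * x.val / M)
      = ∑ i ∈ Finset.range M, ω ^ i := by
    simp_rw [hterm]
    refine Finset.sum_nbij' (fun s => s.val) (fun i => (i : ZMod M)) ?_ ?_ ?_ ?_ ?_
    · intro s _; exact Finset.mem_range.mpr (ZMod.val_lt s)
    · intro i _; exact Finset.mem_univ _
    · intro s _; exact ZMod.natCast_rightInverse s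
    · intro i hi; exact ZMod.val_cast_of_lt (Finset.mem_range.mp hi)
    · intro s _; rfl
  rw [hsum]
  by_cases hx : x = 0
  · subst hx
    simp [hω, ZMod.val_zero]
  · rw [if_neg hx]
    have hω1 : ω ≠ 1 := by
      rw [hω]
      intro hcontra
      obtain ⟨z, hz⟩ := Complex.exp_eq_one_iff.mp hcontra
      have hne : (2 * (Real.pi : ℂ) * Complex.I) ≠ 0 := by
        simp [Real.pi_ne_zero, Complex.I_ne_zero, Complex.ofReal_ne_zero]
      have h' : (2 * (Real.pi : ℂ) * Complex.I) * ((x.val : ℂ) / M) =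
          (2 * (Real.pi : ℂ) * Complex.I) * z := by rw [mul_comm ((z:ℂ)) _] at hz; rw [← hz]; ring
      have h2 := mul_left_cancel₀ hne h'
      rw [div_eq_iff hM] at h2
      have h3 : (x.val : ℤ) = z * M := by exact_mod_cast h2
      have hdvd : M ∣ x.val := by
        have : (M : ℤ) ∣ (x.val : ℤ) := ⟨z, by linarith⟩
        exact_mod_cast this
      have hvpos : 0 < x.val := Nat.pos_of_ne_zero (fun h0 => hx ((ZMod.val_eq_zero x).mp h0))
      exact absurd (Nat.le_of_dvd hvpos hdvd) (not_le.mpr (ZMod.val_lt x))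
    have hωM : ω ^ M = 1 := by
      rw [hω, ← Complex.exp_nat_mul, Complex.exp_eq_one_iff]
      refine ⟨x.val, ?_⟩
      field_simp
      push_cast
      ring
    rw [geom_sum_eq hω1, hωM, sub_self, zero_div]

private lemma sum_exp_pi (q : ℕ) (m : Fin q → ℕ) [∀ j, NeZero (m j)]
    (x : ∀ j : Fin q, ZMod (m j)) :
    ∑ s : (∀ j : Fin q, ZMod (m j)),
        ∏ j, Complex.exp (2 * Real.pi * Complex.I * (s j).val * (x j).val / (m j)) =
      if x = 0 then ((∏ j, m j : ℕ) : ℂ) else 0 := by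
  rw [← Fintype.piFinset_univ, ← Finset.prod_univ_sum
    (t := fun j => (Finset.univ : Finset (ZMod (m j))))
    (f := fun j (sj : ZMod (m j)) =>
      Complex.exp (2 * Real.pi * Complex.I * sj.val * (x j).val / (m j)))]
  have : ∀ j : Fin q,
      (∑ sj : ZMod (m j), Complex.exp (2 * Real.pi * Complex.I * sj.val * (x j).val / (m j)))
        = if x j = 0 then ((m j : ℕ) : ℂ) else 0 := fun j => sum_exp_zmod (m j) (x j)
  rw [Finset.prod_congr rfl fun j _ => this j]
  by_cases hx : x = 0
  · subst hx; push_cast; simp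
  · rw [if_neg hx]
    obtain ⟨j, hj⟩ : ∃ j, x j ≠ 0 := by
      by_contra h; push_neg at h; exact hx (funext h)
    exact Finset.prod_eq_zero (Finset.mem_univ j) (by rw [if_neg hj])

private lemma F_add (q : ℕ) (m : Fin q → ℕ) [∀ j, NeZero (m j)]
    (s a b : ∀ j : Fin q, ZMod (m j)) :
    (∏ j, Complex.exp (2 * Real.pi * Complex.I * (s j).val * ((a + b) j).val / (m j))) =
      (∏ j, Complex.exp (2 * Real.pi * Complex.I * (s j).val * (a j).val / (m j))) *
      (∏ j, Complex.exp (2 * Real.pi * Complex.I * (s j).val * (b j).val / (m j))) := by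
  rw [← Finset.prod_mul_distrib]
  refine Finset.prod_congr rfl fun j _ => ?_
  have h1 : ((a + b) j).val % (m j) = ((a j).val + (b j).val) % (m j) := by
    rw [Pi.add_apply, ZMod.val_add, Nat.mod_mod_of_dvd _ dvd_rfl]
  calc Complex.exp (2 * Real.pi * Complex.I * (s j).val * ((a + b) j).val / (m j))
      = Complex.exp (2 * Real.pi * Complex.I * (s j).val * (((a j).val + (b j).val : ℕ)) / (m j)) :=
        exp_congr_mod (m j) (s j).val h1
    _ = _ := by rw [← Complex.exp_add]; congr 1; push_cast; ring

private lemma F_ne_zero (q : ℕ) (m : Fin q → ℕ) [∀ j, NeZero (m j)]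
    (s t : ∀ j : Fin q, ZMod (m j)) :
    (∏ j, Complex.exp (2 * Real.pi * Complex.I * (s j).val * (t j).val / (m j))) ≠ 0 :=
  Finset.prod_ne_zero_iff.mpr fun j _ => Complex.exp_ne_zero _

private lemma F_conj (q : ℕ) (m : Fin q → ℕ) [∀ j, NeZero (m j)]
    (s t : ∀ j : Fin q, ZMod (m j)) :
    (starRingEnd ℂ) (∏ j, Complex.exp (2 * Real.pi * Complex.I * (s j).val * (t j).val / (m j))) =
      (∏ j, Complex.exp (2 * Real.pi * Complex.I * (s j).val * (t j).val / (m j)))⁻¹ := by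
  rw [map_prod, ← Finset.prod_inv_distrib]
  refine Finset.prod_congr rfl fun j _ => ?_
  rw [← Complex.exp_conj, ← Complex.exp_neg]
  congr 1
  simp only [map_div₀, _root_.map_mul, Complex.conj_I, Complex.conj_ofReal, map_natCast, map_ofNat]
  ring

private lemma key_entry (q : ℕ) (m : Fin q → ℕ) [∀ j, NeZero (m j)]
    (φ : Matrix (∀ j : Fin q, ZMod (m j)) (∀ j : Fin q, ZMod (m j)) ℂ)
    (hφ : ∀ s t, φ s t =
      ∏ j, Complex.exp (2 * Real.pi * Complex.I * (s j).val * (t j).val / (m j)))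
    (k : (∀ j : Fin q, ZMod (m j)) → ℂ) (i j : ∀ j : Fin q, ZMod (m j)) :
    (φᴴ * Matrix.diagonal (φ.mulVec k) * φ) i j = ((∏ j', m j' : ℕ) : ℂ) * k (i - j) := by
  have hmul : ∀ s a b, φ s (a + b) = φ s a * φ s b := fun s a b => by
    rw [hφ, hφ, hφ]; exact F_add q m s a b
  have hne : ∀ s t, φ s t ≠ 0 := fun s t => by rw [hφ]; exact F_ne_zero q m s t
  have hconj : ∀ s t, (starRingEnd ℂ) (φ s t) = (φ s t)⁻¹ := fun s t => by
    rw [hφ]; exact F_conj q m s t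
  have hpoint : ∀ s t, (starRingEnd ℂ) (φ s i) * (φ s t * k t) * φ s j
      = k t * φ s (t - i + j) := by
    intro s t
    have h2 : φ s (t - i + j) * φ s i = φ s t * φ s j := by
      have h3 : t - i + j + i = t + j := by abel
      rw [← hmul, h3, hmul]
    calc (starRingEnd ℂ) (φ s i) * (φ s t * k t) * φ s j
        = k t * (φ s t * φ s j) * (φ s i)⁻¹ := by rw [hconj]; ring
      _ = k t * (φ s (t - i + j) * φ s i) * (φ s i)⁻¹ := by rw [h2]
      _ = k t * φ s (t - i + j) := by rw [mul_assoc, mul_inv_cancel_right₀ (hne s i)]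
  have hsum : ∀ t, ∑ s, φ s (t - i + j) = if t = i - j then ((∏ j', m j' : ℕ) : ℂ) else 0 := by
    intro t
    simp_rw [hφ]
    rw [sum_exp_pi q m (t - i + j)]
    congr 1
    rw [eq_iff_iff, sub_add, sub_eq_zero]
  rw [Matrix.mul_apply]
  simp_rw [Matrix.mul_diagonal, Matrix.conjTranspose_apply, Matrix.mulVec, dotProduct,
    Finset.mul_sum, Finset.sum_mul]
  rw [Finset.sum_comm]
  calc ∑ t, ∑ s, star (φ s i) * (φ s t * k t) * φ s j
      = ∑ t, k t * (if t = i - j then ((∏ j', m j' : ℕ) : ℂ) else 0) := by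
        refine Finset.sum_congr rfl fun t _ => ?_
        rw [← hsum t, Finset.mul_sum]
        exact Finset.sum_congr rfl fun s _ => hpoint s t
    _ = ((∏ j', m j' : ℕ) : ℂ) * k (i - j) := by
        simp [mul_ite, mul_zero, Finset.sum_ite_eq', mul_comm]

/-- `K` is a q-level circulant matrix iff `K = (1/n) φᴴ diag(φ k) φ`, where `k` is the
first column of `K` and `φ` is the multilevel discrete Fourier matrix. -/
theorem mcm_iff_fourier_diagonalization (q : ℕ) (hq : 0 < q) (m : Fin q → ℕ)
    [∀ j, NeZero (m j)] (n : ℕ) (hn : n = ∏ j, m j)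
    (φ : Matrix (∀ j : Fin q, ZMod (m j)) (∀ j : Fin q, ZMod (m j)) ℂ)
    (hφ : ∀ s t, φ s t =
      ∏ j, Complex.exp (2 * Real.pi * Complex.I * (s j).val * (t j).val / (m j)))
    (K : Matrix (∀ j : Fin q, ZMod (m j)) (∀ j : Fin q, ZMod (m j)) ℂ)
    (k : (∀ j : Fin q, ZMod (m j)) → ℂ) (hk : ∀ i, k i = K i 0) :
    (∃ c : (∀ j : Fin q, ZMod (m j)) → ℂ, K = Matrix.circulant c) ↔
      K = (n : ℂ)⁻¹ • (φᴴ * Matrix.diagonal (φ.mulVec k) * φ) := by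
  have hN : ((∏ j', m j' : ℕ) : ℂ) = (n : ℂ) := by rw [hn]
  have hNne : (n : ℂ) ≠ 0 := by
    rw [hn]
    exact Nat.cast_ne_zero.mpr (Finset.prod_ne_zero_iff.mpr fun j _ => NeZero.ne (m j))
  constructor
  · rintro ⟨c, rfl⟩
    have hkc : ∀ i, k i = c i := fun i => by rw [hk i, Matrix.circulant_apply, sub_zero]
    ext i j
    rw [Matrix.smul_apply, key_entry q m φ hφ k i j, hN, smul_eq_mul,
      inv_mul_cancel_left₀ hNne, Matrix.circulant_apply, hkc]
  · intro h
    refine ⟨k, ?_⟩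
    ext i j
    rw [h, Matrix.circulant_apply, Matrix.smul_apply, key_entry q m φ hφ k i j, hN,
      smul_eq_mul, inv_mul_cancel_left₀ hNne]
end

section
/- Let q be a positive integer, m : Fin q → ℕ with each m j > 0, G = ∀ j : Fin q, ZMod (m j), and φ : Matrix G G ℂ with φ s t = ∏ j, exp(2π·I·(s j).val·(t j).val / m j). For every k : G → ℂ, the q-level circulant matrix Matrix.circulant k is invertible (is a unit in the matrix ring Matrix G G ℂ) if and only if every entry of its eigenvalue vector ν = φ.mulVec k is nonzero, i.e., ∀ s : G, (φ.mulVec k) s ≠ 0. -/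
open Complex Matrix

/-- A q-level circulant matrix is invertible iff all entries of its eigenvalue vector
`ν = φ.mulVec k` are nonzero. -/
theorem mcm_isUnit_iff_eigenvalues_ne_zero (q : ℕ) (hq : 0 < q) (m : Fin q → ℕ)
    [∀ j, NeZero (m j)]
    (φ : Matrix (∀ j : Fin q, ZMod (m j)) (∀ j : Fin q, ZMod (m j)) ℂ)
    (hφ : ∀ s t, φ s t =
      ∏ j, Complex.exp (2 * Real.pi * Complex.I * (s j).val * (t j).val / (m j)))
    (k : (∀ j : Fin q, ZMod (m j)) → ℂ) :
    IsUnit (Matrix.circulant k) ↔ ∀ s : ∀ j : Fin q, ZMod (m j), (φ.mulVec k) s ≠ 0 := by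
  classical
  -- φ in terms of the standard additive character
  have hφ' : ∀ s t : ∀ j : Fin q, ZMod (m j), φ s t = ∏ j, ZMod.stdAddChar (s j * t j) := by
    intro s t
    rw [hφ]
    refine Finset.prod_congr rfl fun j _ => ?_
    have h1 : s j * t j = ((((s j).val * (t j).val : ℕ) : ℤ) : ZMod (m j)) := by
      push_cast [ZMod.natCast_val, ZMod.cast_id]
      ring
    rw [h1, ZMod.stdAddChar_coe]
    push_cast
    ring_nf
  -- multiplicativity in the second argument
  have hmulB : ∀ (s a b : ∀ j : Fin q, ZMod (m j)), φ s (a + b) = φ s a * φ s b := by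
    intro s a b
    simp only [hφ', ← Finset.prod_mul_distrib]
    refine Finset.prod_congr rfl fun j _ => ?_
    rw [Pi.add_apply, mul_add, AddChar.map_add_eq_mul]
  -- multiplicativity in the first argument
  have hmulA : ∀ (a b u : ∀ j : Fin q, ZMod (m j)), φ (a + b) u = φ a u * φ b u := by
    intro a b u
    simp only [hφ', ← Finset.prod_mul_distrib]
    refine Finset.prod_congr rfl fun j _ => ?_
    rw [Pi.add_apply, add_mul, AddChar.map_add_eq_mul]
  -- character sums
  have hsum : ∀ r : ∀ j : Fin q, ZMod (m j), (∑ u : ∀ j : Fin q, ZMod (m j), φ r u) =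
      if r = 0 then (Fintype.card (∀ j : Fin q, ZMod (m j)) : ℂ) else 0 := by
    intro r
    simp only [hφ']
    rw [show (∑ u : ∀ j : Fin q, ZMod (m j), ∏ j, ZMod.stdAddChar (r j * u j))
        = ∏ j, ∑ x : ZMod (m j), ZMod.stdAddChar (r j * x) from
      (Fintype.prod_sum fun j x => ZMod.stdAddChar (r j * x)).symm]
    split_ifs with h
    · subst h
      simp only [Pi.zero_apply, zero_mul, AddChar.map_zero_eq_one, Finset.sum_const,
        Finset.card_univ, nsmul_eq_mul, mul_one]
      rw [Fintype.card_pi, Nat.cast_prod]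
    · obtain ⟨j0, hj0⟩ := Function.ne_iff.mp h
      refine Finset.prod_eq_zero (Finset.mem_univ j0) ?_
      have hne : (ZMod.stdAddChar (N := m j0)).mulShift (r j0) ≠ 0 := by
        simpa [← AddChar.one_eq_zero] using ZMod.isPrimitive_stdAddChar (m j0) hj0
      have := AddChar.sum_eq_zero_iff_ne_zero.mpr hne
      simpa [AddChar.mulShift_apply] using this
  -- the intertwining relation
  have hcomm : φ * Matrix.circulant k = Matrix.diagonal (φ.mulVec k) * φ := by
    ext s t
    rw [Matrix.mul_apply, Matrix.diagonal_mul]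
    have : (∑ u : ∀ j : Fin q, ZMod (m j), φ s u * Matrix.circulant k u t)
        = ∑ v : ∀ j : Fin q, ZMod (m j), φ s (v + t) * k v := by
      refine Fintype.sum_equiv (Equiv.addRight t).symm _ _ fun u => ?_
      simp [Matrix.circulant_apply, sub_eq_add_neg, add_assoc]
    rw [this]
    simp only [hmulB]
    rw [Matrix.mulVec, dotProduct, Finset.sum_mul]
    exact Finset.sum_congr rfl fun v _ => by ring
  -- φ is invertible
  have hφunit : IsUnit φ.det := by
    set ψ : Matrix (∀ j : Fin q, ZMod (m j)) (∀ j : Fin q, ZMod (m j)) ℂ := Matrix.of fun u t => φ (-t) u with hψ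
    have hmul : φ * ψ = (Fintype.card (∀ j : Fin q, ZMod (m j)) : ℂ) • (1 : Matrix (∀ j : Fin q, ZMod (m j)) (∀ j : Fin q, ZMod (m j)) ℂ) := by
      ext s t
      rw [Matrix.mul_apply]
      have : (∑ u : ∀ j : Fin q, ZMod (m j), φ s u * ψ u t) = ∑ u : ∀ j : Fin q, ZMod (m j), φ (s - t) u := by
        refine Finset.sum_congr rfl fun u _ => ?_
        rw [hψ, Matrix.of_apply, sub_eq_add_neg, hmulA]
      rw [this, hsum]
      rcases eq_or_ne s t with hst | hst
      · subst hst
        simp [Matrix.one_apply, Matrix.smul_apply]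
      · rw [if_neg (sub_ne_zero.mpr hst)]
        simp [Matrix.one_apply, Matrix.smul_apply, hst]
    have hdet : φ.det * ψ.det = ((Fintype.card (∀ j : Fin q, ZMod (m j)) : ℂ)) ^ Fintype.card (∀ j : Fin q, ZMod (m j)) := by
      rw [← Matrix.det_mul, hmul, Matrix.det_smul, Matrix.det_one, mul_one]
    have hc : ((Fintype.card (∀ j : Fin q, ZMod (m j)) : ℂ)) ^ Fintype.card (∀ j : Fin q, ZMod (m j)) ≠ 0 := by
      apply pow_ne_zero
      exact_mod_cast Fintype.card_ne_zero
    rw [isUnit_iff_ne_zero]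
    intro h0
    rw [h0, zero_mul] at hdet
    exact hc hdet.symm
  -- determinant of the circulant
  have hdetC : (Matrix.circulant k).det = ∏ s : ∀ j : Fin q, ZMod (m j), (φ.mulVec k) s := by
    have h1 : φ.det * (Matrix.circulant k).det
        = (∏ s : ∀ j : Fin q, ZMod (m j), (φ.mulVec k) s) * φ.det := by
      rw [← Matrix.det_mul, hcomm, Matrix.det_mul, Matrix.det_diagonal]
    have h2 : φ.det ≠ 0 := by
      rw [← isUnit_iff_ne_zero]; exact hφunit
    exact mul_left_cancel₀ h2 (h1.trans (mul_comm _ _))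
  rw [Matrix.isUnit_iff_isUnit_det, isUnit_iff_ne_zero, hdetC]
  rw [Finset.prod_ne_zero_iff]
  constructor
  · intro h s; exact h s (Finset.mem_univ s)
  · intro h s _; exact h s
end

section
/- Let q be a positive integer, m : Fin q → ℕ with each m j > 0, n = ∏ j, m j, G = ∀ j : Fin q, ZMod (m j), and φ : Matrix G G ℂ with φ s t = ∏ j, exp(2π·I·(s j).val·(t j).val / m j). Suppose A = Matrix.circulant a (a : G → ℂ) is an invertible q-level circulant matrix and let ν = φ.mulVec a be its vector of eigenvalues. Then the inverse A⁻¹ is also a q-level circulant matrix (there exists a' : G → ℂ with A⁻¹ = Matrix.circulant a'), and A⁻¹ = (n : ℂ)⁻¹ • (φᴴ * Matrix.diagonal (fun s => (ν s)⁻¹) * φ). -/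
/-!
The rows `t ↦ φ s t` of `φ` are the additive characters of `G`. A character `χ` turns
convolution into multiplication, so the row `φ s` is a left eigenvector of every circulant
`circulant a`, with eigenvalue `ν s`: that is, `φ * circulant a = diagonal ν * φ`. Orthogonality
of the characters gives `φᴴ * φ = n • 1`, hence `A = n⁻¹ • φᴴ * diagonal ν * φ`. Since
`det A = ∏ s, ν s ≠ 0`, the diagonal can be inverted, and `n⁻¹ • φᴴ * diagonal ν⁻¹ * φ` is the
inverse of `A`. Any matrix `φᴴ * diagonal d * φ` is circulant, since its `(s, t)` entry
`∑ u, d u * χ_u (t - s)` depends only on `s - t`.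
-/

open Complex Matrix Finset

namespace Matrix

theorem inv_eq_of_mul_eq_diagonal_mul {n K : Type*} [Fintype n] [DecidableEq n] [Field K]
    {A P Q : Matrix n n K} {ν : n → K} (hQP : Q * P = 1) (hPA : P * A = diagonal ν * P)
    (hA : IsUnit A) : A⁻¹ = Q * diagonal (fun s => (ν s)⁻¹) * P := by
  have hdet : A.det = ∏ s, ν s := by
    have h := congrArg det hPA
    rw [det_mul, det_mul, det_diagonal, mul_comm] at h
    exact mul_right_cancel₀ (isUnit_det_of_left_inverse hQP).ne_zero h
  have hν : ∀ s, ν s ≠ 0 := fun s =>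
    prod_ne_zero_iff.mp (hdet ▸ ((isUnit_iff_isUnit_det A).mp hA).ne_zero) s (mem_univ s)
  refine inv_eq_left_inv ?_
  calc Q * diagonal (fun s => (ν s)⁻¹) * P * A
      = Q * (diagonal (fun s => (ν s)⁻¹) * diagonal ν) * P := by
        simp only [Matrix.mul_assoc, hPA]
    _ = 1 := by
        rw [diagonal_mul_diagonal, ← hQP]
        simp [inv_mul_cancel₀ (hν _)]

variable {G : Type*} [AddCommGroup G]

def ofAddChar {R : Type*} [Monoid R] (χ : G → AddChar G R) : Matrix G G R :=
  of fun s t => χ s t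

@[simp]
theorem ofAddChar_apply {R : Type*} [Monoid R] (χ : G → AddChar G R) (s t : G) :
    ofAddChar χ s t = χ s t :=
  rfl

variable [Fintype G] [DecidableEq G]

theorem ofAddChar_mul_circulant {R : Type*} [CommRing R] (χ : G → AddChar G R) (a : G → R) :
    ofAddChar χ * circulant a = diagonal (ofAddChar χ *ᵥ a) * ofAddChar χ := by
  ext s t
  rw [mul_apply, diagonal_mul, mulVec, dotProduct, sum_mul]
  refine Fintype.sum_equiv (Equiv.subRight t) _ _ fun x => ?_
  have hχ : χ s x = χ s (x - t) * χ s t := by rw [← AddChar.map_add_eq_mul, sub_add_cancel]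
  simp only [ofAddChar_apply, circulant_apply, hχ, Equiv.subRight_apply]
  ring

variable {K : Type*} [RCLike K]

theorem conjTranspose_ofAddChar_mul_diagonal_mul (χ : G → AddChar G K) (d : G → K) :
    (ofAddChar χ)ᴴ * diagonal d * ofAddChar χ = circulant fun x => ∑ u, d u * χ u (-x) := by
  ext s t
  rw [mul_apply, circulant_apply, neg_sub, sub_eq_add_neg]
  refine sum_congr rfl fun u _ => ?_
  rw [mul_diagonal, conjTranspose_apply, ofAddChar_apply, ofAddChar_apply, AddChar.map_add_eq_mul,
    AddChar.map_neg_eq_conj, RCLike.star_def]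
  ring

theorem conjTranspose_ofAddChar_mul_self {χ : G → AddChar G K} {c : K}
    (hχ : ∀ x, ∑ u, χ u x = if x = 0 then c else 0) :
    (ofAddChar χ)ᴴ * ofAddChar χ = c • 1 := by
  ext s t
  simp only [mul_apply, conjTranspose_apply, ofAddChar_apply, RCLike.star_def,
    ← AddChar.map_neg_eq_conj, ← AddChar.map_add_eq_mul, hχ, neg_add_eq_zero, smul_apply, one_apply]
  split_ifs <;> simp

end Matrix

namespace ZMod

theorem exp_val_mul_val_eq_stdAddChar {N : ℕ} [NeZero N] (x y : ZMod N) :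
    exp (2 * Real.pi * I * x.val * y.val / N) = stdAddChar (x * y) := by
  have hxy : ((x.val * y.val : ℤ) : ZMod N) = x * y := by
    push_cast
    rw [natCast_zmod_val, natCast_zmod_val]
  rw [← hxy, stdAddChar_coe]
  push_cast
  ring_nf

variable {ι : Type*} [Fintype ι] (m : ι → ℕ) [∀ j, NeZero (m j)]

noncomputable def piStdAddChar (s : ∀ j, ZMod (m j)) : AddChar (∀ j, ZMod (m j)) ℂ where
  toFun t := ∏ j, stdAddChar (s j * t j)
  map_zero_eq_one' := by simp
  map_add_eq_mul' x y := by simp [mul_add, AddChar.map_add_eq_mul, prod_mul_distrib]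

theorem piStdAddChar_apply (s t : ∀ j, ZMod (m j)) :
    piStdAddChar m s t = ∏ j, stdAddChar (s j * t j) :=
  rfl

theorem sum_piStdAddChar_apply [DecidableEq ι] (x : ∀ j, ZMod (m j)) :
    ∑ s, piStdAddChar m s x = if x = 0 then ((∏ j, m j : ℕ) : ℂ) else 0 := by
  calc ∑ s, piStdAddChar m s x = ∏ j, ∑ c : ZMod (m j), stdAddChar (c * x j) :=
        (Fintype.prod_sum fun j (c : ZMod (m j)) => stdAddChar (c * x j)).symm
    _ = ∏ j, if x j = 0 then (m j : ℂ) else 0 := by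
        simp only [AddChar.sum_mulShift _ (isPrimitive_stdAddChar _), ZMod.card, Nat.cast_ite,
          Nat.cast_zero]
    _ = _ := by
        by_cases hx : x = 0
        · simp [hx]
        · obtain ⟨j, hj⟩ := Function.ne_iff.mp hx
          rw [if_neg hx]
          exact prod_eq_zero (mem_univ j) (if_neg hj)

end ZMod

theorem mcm_inverse_general (q : ℕ) (m : Fin q → ℕ) [∀ j, NeZero (m j)]
    (n : ℕ) (hn : n = ∏ j, m j)
    (φ : Matrix (∀ j : Fin q, ZMod (m j)) (∀ j : Fin q, ZMod (m j)) ℂ)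
    (hφ : ∀ s t, φ s t =
      ∏ j, Complex.exp (2 * Real.pi * Complex.I * (s j).val * (t j).val / (m j)))
    (a : (∀ j : Fin q, ZMod (m j)) → ℂ)
    (A : Matrix (∀ j : Fin q, ZMod (m j)) (∀ j : Fin q, ZMod (m j)) ℂ)
    (hA : A = Matrix.circulant a) (hAunit : IsUnit A)
    (ν : (∀ j : Fin q, ZMod (m j)) → ℂ) (hν : ν = φ.mulVec a) :
    (∃ a' : (∀ j : Fin q, ZMod (m j)) → ℂ, A⁻¹ = Matrix.circulant a') ∧
      A⁻¹ = (n : ℂ)⁻¹ • (φᴴ * Matrix.diagonal (fun s => (ν s)⁻¹) * φ) := by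
  obtain rfl : φ = ofAddChar (ZMod.piStdAddChar m) := ext fun s t => by
    simp only [hφ, ofAddChar_apply, ZMod.piStdAddChar_apply, ZMod.exp_val_mul_val_eq_stdAddChar]
  subst hA hν hn
  have hn0 : ((∏ j, m j : ℕ) : ℂ) ≠ 0 := by simp [prod_ne_zero_iff, NeZero.ne]
  have hleft : ((∏ j, m j : ℕ) : ℂ)⁻¹ • (ofAddChar (ZMod.piStdAddChar m))ᴴ *
      ofAddChar (ZMod.piStdAddChar m) = 1 := by
    rw [smul_mul, conjTranspose_ofAddChar_mul_self (ZMod.sum_piStdAddChar_apply m), smul_smul,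
      inv_mul_cancel₀ hn0, one_smul]
  have hinv := inv_eq_of_mul_eq_diagonal_mul hleft (ofAddChar_mul_circulant _ a) hAunit
  rw [smul_mul, smul_mul] at hinv
  refine ⟨?_, hinv⟩
  rw [hinv, conjTranspose_ofAddChar_mul_diagonal_mul, ← circulant_smul]
  exact ⟨_, rfl⟩

/-- The inverse of an invertible q-level circulant matrix is again a q-level circulant
matrix, and `A⁻¹ = (1/n) φᴴ diag(ν⁻¹) φ` where `ν = φ.mulVec a`. -/
theorem mcm_inverse (q : ℕ) (hq : 0 < q) (m : Fin q → ℕ) [∀ j, NeZero (m j)]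
    (n : ℕ) (hn : n = ∏ j, m j)
    (φ : Matrix (∀ j : Fin q, ZMod (m j)) (∀ j : Fin q, ZMod (m j)) ℂ)
    (hφ : ∀ s t, φ s t =
      ∏ j, Complex.exp (2 * Real.pi * Complex.I * (s j).val * (t j).val / (m j)))
    (a : (∀ j : Fin q, ZMod (m j)) → ℂ)
    (A : Matrix (∀ j : Fin q, ZMod (m j)) (∀ j : Fin q, ZMod (m j)) ℂ)
    (hA : A = Matrix.circulant a) (hAunit : IsUnit A)
    (ν : (∀ j : Fin q, ZMod (m j)) → ℂ) (hν : ν = φ.mulVec a) :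
    (∃ a' : (∀ j : Fin q, ZMod (m j)) → ℂ, A⁻¹ = Matrix.circulant a') ∧
      A⁻¹ = (n : ℂ)⁻¹ • (φᴴ * Matrix.diagonal (fun s => (ν s)⁻¹) * φ) :=
  mcm_inverse_general q m n hn φ hφ a A hA hAunit ν hν
end

section
/- Let q be a positive integer, m : Fin q → ℕ with each m j > 0, n = ∏ j, m j, G = ∀ j : Fin q, ZMod (m j), and φ : Matrix G G ℂ with φ s t = ∏ j, exp(2π·I·(s j).val·(t j).val / m j). For every k : G → ℂ and every x : G → ℂ, the matrix–vector product of the q-level circulant matrix with x can be computed via Fourier transforms: (Matrix.circulant k).mulVec x = (n : ℂ)⁻¹ • φᴴ.mulVec (fun s => (φ.mulVec k) s * (φ.mulVec x) s). -/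
open Complex Matrix

set_option maxHeartbeats 1000000

private lemma zmod_sum_val {m : ℕ} [NeZero m] (f : ℕ → ℂ) :
    ∑ t : ZMod m, f t.val = ∑ i ∈ Finset.range m, f i := by
  refine Finset.sum_bij' (fun t _ => t.val) (fun i _ => (i : ZMod m)) ?_ ?_ ?_ ?_ ?_
  · intro a _; exact Finset.mem_range.mpr (ZMod.val_lt a)
  · intro a _; exact Finset.mem_univ _
  · intro a _; exact ZMod.natCast_rightInverse a
  · intro a ha; exact ZMod.val_cast_of_lt (Finset.mem_range.mp ha)
  · intro a _; rfl

private lemma zmod_natCast_val {M : ℕ} [NeZero M] (y : ZMod M) :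
    ((y.val : ℕ) : ZMod M) = y := ZMod.natCast_rightInverse y

private lemma root_sum (m : ℕ) [NeZero m] (c : ℤ) :
    ∑ t : ZMod m, Complex.exp (2 * Real.pi * Complex.I * c * t.val / m) =
      if (c : ZMod m) = 0 then (m : ℂ) else 0 := by
  have hm : (m : ℂ) ≠ 0 := Nat.cast_ne_zero.mpr (NeZero.ne m)
  set ζ : ℂ := Complex.exp (2 * Real.pi * Complex.I * c / m) with hζ
  have hterm : ∀ j : ℕ, Complex.exp (2 * Real.pi * Complex.I * c * j / m) = ζ ^ j := by
    intro j
    rw [hζ, ← Complex.exp_nat_mul]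
    congr 1
    field_simp
  have hsum : ∑ t : ZMod m, Complex.exp (2 * Real.pi * Complex.I * c * t.val / m)
      = ∑ i ∈ Finset.range m, ζ ^ i := by
    rw [zmod_sum_val (fun j => Complex.exp (2 * Real.pi * Complex.I * c * j / m))]
    exact Finset.sum_congr rfl fun i _ => hterm i
  rw [hsum]
  have hζ1 : ζ = 1 ↔ (c : ZMod m) = 0 := by
    rw [hζ, Complex.exp_eq_one_iff, ZMod.intCast_zmod_eq_zero_iff_dvd]
    constructor
    · rintro ⟨d, hd⟩
      refine ⟨d, ?_⟩
      have h2 : (2 : ℂ) * Real.pi * Complex.I ≠ 0 := by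
        simp [Real.pi_ne_zero, Complex.I_ne_zero]
      field_simp at hd
      have h3 : (2 : ℂ) * Real.pi * Complex.I * c = 2 * Real.pi * Complex.I * (m * d) := by
        linear_combination (2 * Real.pi * Complex.I) * hd
      have : (c : ℂ) = ((m * d : ℤ) : ℂ) := by
        push_cast
        exact mul_left_cancel₀ h2 h3
      exact_mod_cast this
    · rintro ⟨d, hd⟩
      refine ⟨d, ?_⟩
      rw [hd]
      push_cast
      field_simp
  by_cases h : (c : ZMod m) = 0
  · rw [if_pos h, hζ1.mpr h]
    simp
  · rw [if_neg h]
    have hne : ζ ≠ 1 := fun hh => h (hζ1.mp hh)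
    rw [geom_sum_eq hne]
    have hζm : ζ ^ m = 1 := by
      rw [hζ, ← Complex.exp_nat_mul, Complex.exp_eq_one_iff]
      exact ⟨c, by field_simp⟩
    rw [hζm]
    simp

/-- MCM–vector products via the multilevel Fourier transform:
`(circulant k) x = (1/n) φᴴ ((φ k) ⊙ (φ x))`. -/
theorem mcm_mulVec_via_fft (q : ℕ) (hq : 0 < q) (m : Fin q → ℕ) [∀ j, NeZero (m j)]
    (n : ℕ) (hn : n = ∏ j, m j)
    (φ : Matrix (∀ j : Fin q, ZMod (m j)) (∀ j : Fin q, ZMod (m j)) ℂ)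
    (hφ : ∀ s t, φ s t =
      ∏ j, Complex.exp (2 * Real.pi * Complex.I * (s j).val * (t j).val / (m j)))
    (k x : (∀ j : Fin q, ZMod (m j)) → ℂ) :
    (Matrix.circulant k).mulVec x =
      (n : ℂ)⁻¹ • φᴴ.mulVec (fun s => (φ.mulVec k) s * (φ.mulVec x) s) := by
  have hn0 : (n : ℂ) ≠ 0 := by
    rw [hn]
    push_cast
    exact Finset.prod_ne_zero_iff.mpr fun j _ => Nat.cast_ne_zero.mpr (NeZero.ne (m j))
  funext i
  -- key: ∑ s, conj (φ s i) * (φ s a * φ s b) = if a + b = i then n else 0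
  have key : ∀ a b : (∀ j, ZMod (m j)),
      ∑ s, (starRingEnd ℂ) (φ s i) * (φ s a * φ s b)
        = if a + b = i then (n : ℂ) else 0 := by
    intro a b
    have hterm : ∀ s, (starRingEnd ℂ) (φ s i) * (φ s a * φ s b)
        = ∏ j, Complex.exp (2 * Real.pi * Complex.I *
            (((a j).val + (b j).val - (i j).val : ℤ)) * (s j).val / (m j)) := by
      intro s
      rw [hφ, hφ, hφ, map_prod, ← Finset.prod_mul_distrib, ← Finset.prod_mul_distrib]
      refine Finset.prod_congr rfl fun j _ => ?_
      rw [← Complex.exp_conj, ← Complex.exp_add, ← Complex.exp_add]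
      congr 1
      have : (starRingEnd ℂ) (2 * Real.pi * Complex.I * (s j).val * (i j).val / (m j))
          = -(2 * Real.pi * Complex.I * (s j).val * (i j).val / (m j)) := by
        simp only [map_div₀, _root_.map_mul, Complex.conj_I, Complex.conj_natCast, map_ofNat,
          Complex.conj_ofReal]
        ring
      rw [this]
      push_cast
      have hmj : (m j : ℂ) ≠ 0 := Nat.cast_ne_zero.mpr (NeZero.ne (m j))
      field_simp
      ring
    calc ∑ s, (starRingEnd ℂ) (φ s i) * (φ s a * φ s b)
        = ∑ s : (∀ j, ZMod (m j)), ∏ j, Complex.exp (2 * Real.pi * Complex.I *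
            (((a j).val + (b j).val - (i j).val : ℤ)) * (s j).val / (m j)) :=
          Finset.sum_congr rfl fun s _ => hterm s
      _ = ∏ j, ∑ t : ZMod (m j), Complex.exp (2 * Real.pi * Complex.I *
            (((a j).val + (b j).val - (i j).val : ℤ)) * t.val / (m j)) :=
          (Fintype.prod_sum (κ := fun j : Fin q => ZMod (m j))
            (fun j t => Complex.exp (2 * Real.pi * Complex.I *
              (((a j).val + (b j).val - (i j).val : ℤ)) * t.val / (m j)))).symm
      _ = ∏ j, if ((((a j).val + (b j).val - (i j).val : ℤ)) : ZMod (m j)) = 0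
            then ((m j : ℕ) : ℂ) else 0 :=
          Finset.prod_congr rfl fun j _ => root_sum (m j) _
      _ = if a + b = i then (n : ℂ) else 0 := by
          by_cases hab : a + b = i
          · rw [if_pos hab, hn]
            push_cast
            refine Finset.prod_congr rfl fun j _ => ?_
            rw [if_pos]
            have := congrFun hab j
            simp only [Pi.add_apply] at this
            push_cast
            rw [zmod_natCast_val, zmod_natCast_val, zmod_natCast_val, this, sub_self]
          · rw [if_neg hab]
            obtain ⟨j, hj⟩ : ∃ j, a j + b j ≠ i j := by
              by_contra hc
              push_neg at hc
              exact hab (funext fun j => hc j)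
            refine Finset.prod_eq_zero (Finset.mem_univ j) ?_
            rw [if_neg]
            intro hz
            apply hj
            have : ((((a j).val + (b j).val - (i j).val : ℤ)) : ZMod (m j))
                = a j + b j - i j := by
              push_cast
              rw [zmod_natCast_val, zmod_natCast_val, zmod_natCast_val]
            rw [this] at hz
            linear_combination hz
  -- now compute both sides
  simp only [mulVec, dotProduct, Pi.smul_apply, smul_eq_mul, conjTranspose_apply,
    circulant_apply, RCLike.star_def]
  have e1 : ∀ s, (starRingEnd ℂ) (φ s i) * ((∑ a, φ s a * k a) * (∑ b, φ s b * x b))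
      = ∑ a, ∑ b, (k a * x b) * ((starRingEnd ℂ) (φ s i) * (φ s a * φ s b)) := by
    intro s
    rw [Finset.sum_mul_sum, Finset.mul_sum]
    refine Finset.sum_congr rfl fun a _ => ?_
    rw [Finset.mul_sum]
    refine Finset.sum_congr rfl fun b _ => ?_
    ring
  have e2 : ∑ s, (starRingEnd ℂ) (φ s i) * ((∑ a, φ s a * k a) * (∑ b, φ s b * x b))
      = ∑ a, ∑ b, (k a * x b) * (if a + b = i then (n : ℂ) else 0) := by
    simp_rw [e1]
    rw [Finset.sum_comm]
    refine Finset.sum_congr rfl fun a _ => ?_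
    rw [Finset.sum_comm]
    refine Finset.sum_congr rfl fun b _ => ?_
    rw [← Finset.mul_sum, key a b]
  have e3 : ∀ a, ∑ b, (k a * x b) * (if a + b = i then (n : ℂ) else 0)
      = k a * x (i - a) * n := by
    intro a
    rw [Finset.sum_eq_single (i - a)]
    · rw [if_pos (by abel)]
    · intro b _ hb
      rw [if_neg fun h => hb (by rw [← h]; abel), mul_zero]
    · intro h; exact absurd (Finset.mem_univ _) h
  rw [e2]
  simp_rw [e3]
  rw [← Finset.sum_mul, mul_comm ((n : ℂ)⁻¹), mul_assoc, mul_inv_cancel₀ hn0, mul_one]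
  refine Fintype.sum_equiv (Equiv.subLeft i) _ _ fun b => ?_
  simp only [Equiv.subLeft_apply, sub_sub_cancel]
end

section
/- Let G be a finite additive abelian group of cardinality n > 0 (e.g., G = ∀ j : Fin q, ZMod (m j) with every m j > 0, n = ∏ j, m j). Let Λ : G → ℝ, k : G → ℝ, and set τ = (∑ i : G, Λ i) / n. Then the circulant matrix Matrix.circulant (τ • k) = τ • Matrix.circulant k minimizes the squared Frobenius distance to Matrix.diagonal Λ * Matrix.circulant k over all circulant matrices: for every a : G → ℝ, ∑ i : G, ∑ j : G, ((Matrix.diagonal Λ * Matrix.circulant k) i j − (Matrix.circulant (τ • k)) i j)^2 ≤ ∑ i : G, ∑ j : G, ((Matrix.diagonal Λ * Matrix.circulant k) i j − (Matrix.circulant a) i j)^2. -/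
open Matrix

lemma mean_min_aux {G : Type*} [Fintype G] (n : ℕ) (hn : n = Fintype.card G)
    (hn0 : 0 < n) (x : G → ℝ) (m c : ℝ) (hm : m = (∑ i : G, x i) / n) :
    ∑ i : G, (x i - m) ^ 2 ≤ ∑ i : G, (x i - c) ^ 2 := by
  have hsum : ∑ i : G, x i = n * m := by
    rw [hm]; field_simp
  have key : ∑ i : G, (x i - c) ^ 2 - ∑ i : G, (x i - m) ^ 2 = n * (m - c) ^ 2 := by
    rw [← Finset.sum_sub_distrib]
    have h1 : ∀ i : G, (x i - c) ^ 2 - (x i - m) ^ 2 = (m - c) * (2 * x i - c - m) := by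
      intro i; ring
    have h2 : ∑ i : G, (m - c) * (2 * x i - c - m) = (m - c) * (2 * (n * m) - n * (c + m)) := by
      rw [← Finset.mul_sum]
      congr 1
      rw [Finset.sum_sub_distrib, Finset.sum_sub_distrib, ← Finset.mul_sum, hsum,
        Finset.sum_const, Finset.sum_const, Finset.card_univ, ← hn, nsmul_eq_mul, nsmul_eq_mul]
      ring
    simp_rw [h1]
    rw [h2]; ring
  nlinarith [sq_nonneg (m - c), (Nat.cast_pos.mpr hn0 : (0:ℝ) < n)]

/-- Proposition 1: `τ • circulant k` with `τ = (∑ i, Λ i) / n` is the best circulant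
approximation (in the squared Frobenius norm) of `diag(Λ) * circulant k`. -/
theorem best_circulant_approximation (G : Type*) [AddCommGroup G] [Fintype G]
    [DecidableEq G] (n : ℕ) (hn : n = Fintype.card G) (hn0 : 0 < n)
    (Λ k : G → ℝ) (τ : ℝ) (hτ : τ = (∑ i : G, Λ i) / n) :
    ∀ a : G → ℝ,
      ∑ i : G, ∑ j : G,
          ((Matrix.diagonal Λ * Matrix.circulant k) i j -
            (Matrix.circulant (τ • k)) i j) ^ 2 ≤
        ∑ i : G, ∑ j : G,
          ((Matrix.diagonal Λ * Matrix.circulant k) i j - (Matrix.circulant a) i j) ^ 2 := by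
  intro a
  have hentry : ∀ (c : G → ℝ),
      ∑ i : G, ∑ j : G, ((Matrix.diagonal Λ * Matrix.circulant k) i j -
        (Matrix.circulant c) i j) ^ 2
      = ∑ s : G, ∑ i : G, (Λ i * k s - c s) ^ 2 := by
    intro c
    have : ∀ i : G, ∑ j : G, ((Matrix.diagonal Λ * Matrix.circulant k) i j -
        (Matrix.circulant c) i j) ^ 2 = ∑ s : G, (Λ i * k s - c s) ^ 2 := by
      intro i
      refine Fintype.sum_equiv (Equiv.subLeft i) _ _ (fun j => ?_)
      simp [Matrix.mul_apply, Matrix.diagonal_apply, Matrix.circulant_apply, ite_mul, Equiv.subLeft]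
    simp_rw [this]
    exact Finset.sum_comm
  rw [hentry, hentry]
  refine Finset.sum_le_sum fun s _ => ?_
  refine mean_min_aux n hn hn0 (fun i => Λ i * k s) _ _ ?_
  simp only [Pi.smul_apply, smul_eq_mul, hτ, ← Finset.sum_mul]
  ring
end

section
/- Let n be a positive integer, K : Matrix (Fin n) (Fin n) ℝ a positive semidefinite symmetric matrix (Matrix.PosSemidef K), Λ : Fin n → ℝ with Λ i ≥ 0 for all i, and c > 0 a real number. Then the matrix Matrix.diagonal Λ * K + c • (1 : Matrix (Fin n) (Fin n) ℝ) is invertible (is a unit in the matrix ring). Consequently, for every b : Fin n → ℝ the linear system (Matrix.diagonal Λ * K + c • 1).mulVec d = b has a unique solution d. -/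
open Matrix

/-- For a positive semidefinite kernel matrix `K`, nonnegative diagonal weights `Λ`,
and `c > 0`, the matrix `diag(Λ) * K + c • 1` is invertible, and the corresponding
linear system has a unique solution for every right-hand side. -/
theorem newton_system_unique_solution (n : ℕ) (hn : 0 < n)
    (K : Matrix (Fin n) (Fin n) ℝ) (hK : K.PosSemidef)
    (Λ : Fin n → ℝ) (hΛ : ∀ i, 0 ≤ Λ i) (c : ℝ) (hc : 0 < c) :
    IsUnit (Matrix.diagonal Λ * K + c • (1 : Matrix (Fin n) (Fin n) ℝ)) ∧
      ∀ b : Fin n → ℝ, ∃! d : Fin n → ℝ,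
        (Matrix.diagonal Λ * K + c • (1 : Matrix (Fin n) (Fin n) ℝ)).mulVec d = b := by
  set M := Matrix.diagonal Λ * K + c • (1 : Matrix (Fin n) (Fin n) ℝ) with hMdef
  have hker : ∀ x : Fin n → ℝ, M.mulVec x = 0 → x = 0 := by
    intro x hx
    set y := K.mulVec x with hy
    have hveq : (Matrix.diagonal Λ).mulVec y + c • x = 0 := by
      rw [hMdef, Matrix.add_mulVec, Matrix.smul_mulVec, Matrix.one_mulVec,
        ← Matrix.mulVec_mulVec] at hx
      exact hx
    have hxeq : ∀ i, Λ i * y i + c * x i = 0 := by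
      intro i
      simpa [Matrix.mulVec_diagonal] using congrFun hveq i
    -- key sum identity
    have hsum : ∑ i, (Λ i * y i ^ 2) + c * (x ⬝ᵥ y) = 0 := by
      have h0 : ∑ i, y i * (Λ i * y i + c * x i) = 0 := by simp [hxeq]
      rw [← h0, dotProduct, Finset.mul_sum, ← Finset.sum_add_distrib]
      exact Finset.sum_congr rfl fun i _ => by ring
    have hxy : 0 ≤ x ⬝ᵥ y := by
      have := hK.dotProduct_mulVec_nonneg x
      simpa [hy] using this
    have hΛy : 0 ≤ ∑ i, (Λ i * y i ^ 2) :=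
      Finset.sum_nonneg fun i _ => mul_nonneg (hΛ i) (sq_nonneg _)
    have hcxy : 0 ≤ c * (x ⬝ᵥ y) := mul_nonneg hc.le hxy
    have h1 : ∑ i, (Λ i * y i ^ 2) = 0 := le_antisymm (by linarith) hΛy
    have h2 : ∀ i, Λ i * y i ^ 2 = 0 := by
      intro i
      have := (Finset.sum_eq_zero_iff_of_nonneg
        (fun i _ => mul_nonneg (hΛ i) (sq_nonneg (y i)))).mp h1
      exact this i (Finset.mem_univ i)
    funext i
    have hΛyi : Λ i * y i = 0 := by
      rcases eq_or_ne (y i) 0 with h | h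
      · simp [h]
      · have := h2 i
        rw [sq, ← mul_assoc] at this
        exact (mul_eq_zero.mp this).resolve_right h
    have := hxeq i
    rw [hΛyi, zero_add] at this
    have := (mul_eq_zero.mp this).resolve_left hc.ne'
    simpa using this
  have hunit : IsUnit M := by
    refine (Matrix.isUnit_iff_isUnit_det M).mpr (isUnit_iff_ne_zero.mpr fun hdet => ?_)
    obtain ⟨v, hv0, hv⟩ := Matrix.exists_mulVec_eq_zero_iff.mpr hdet
    exact hv0 (hker v hv)
  refine ⟨hunit, fun b => ?_⟩
  have hinj : Function.Injective M.mulVec := Matrix.mulVec_injective_iff_isUnit.mpr hunit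
  have hsurj : Function.Surjective M.mulVec := Matrix.mulVec_surjective_iff_isUnit.mpr hunit
  obtain ⟨d, hd⟩ := hsurj b
  exact ⟨d, hd, fun d' hd' => hinj (hd'.trans hd.symm)⟩
end

section
/- Let n be a positive integer, K : Matrix (Fin n) (Fin n) ℝ a positive semidefinite symmetric matrix (Matrix.PosSemidef K), λ ≥ 0 a real number, and y : Fin n → ℝ with y i ∈ {0,1} for all i. Define p : (Fin n → ℝ) → Fin n → ℝ by p α i = (1 + Real.exp (−(K.mulVec α) i))⁻¹, and define the kernel logistic regression objective F : (Fin n → ℝ) → ℝ by F(α) = (λ/2) * (∑ i, α i * (K.mulVec α) i) − (1/n) * ∑ i, (y i * Real.log (p α i) + (1 − y i) * Real.log (1 − p α i)). Then F is convex on all of ℝⁿ (ConvexOn ℝ Set.univ F). -/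
open Matrix

private lemma logexp_hasDeriv (t : ℝ) :
    HasDerivAt (fun t : ℝ => Real.log (1 + Real.exp t)) (Real.exp t / (1 + Real.exp t)) t := by
  have h1 : HasDerivAt (fun t : ℝ => 1 + Real.exp t) (Real.exp t) t :=
    (Real.hasDerivAt_exp t).const_add 1
  exact h1.log (by positivity)

private lemma logexp_convex :
    ConvexOn ℝ Set.univ (fun t : ℝ => Real.log (1 + Real.exp t)) := by
  have hderiv : deriv (fun t : ℝ => Real.log (1 + Real.exp t)) =
      fun t => Real.exp t / (1 + Real.exp t) := funext fun t => (logexp_hasDeriv t).deriv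
  have hd2 : ∀ t : ℝ, HasDerivAt (fun t : ℝ => Real.exp t / (1 + Real.exp t))
      ((Real.exp t * (1 + Real.exp t) - Real.exp t * Real.exp t) / (1 + Real.exp t) ^ 2) t := by
    intro t
    exact (Real.hasDerivAt_exp t).div ((Real.hasDerivAt_exp t).const_add 1) (by positivity)
  refine convexOn_univ_of_deriv2_nonneg
    (fun t => (logexp_hasDeriv t).differentiableAt) ?_ ?_
  · rw [hderiv]; exact fun t => (hd2 t).differentiableAt
  · intro t
    have : deriv^[2] (fun t : ℝ => Real.log (1 + Real.exp t)) t =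
        (Real.exp t * (1 + Real.exp t) - Real.exp t * Real.exp t) / (1 + Real.exp t) ^ 2 := by
      simp only [Function.iterate_succ, Function.iterate_zero, Function.comp_apply, id_eq,
        hderiv]
      exact (hd2 t).deriv
    rw [this]
    have h := Real.exp_pos t
    apply div_nonneg
    · nlinarith
    · positivity

private lemma convexOn_comp_linear {n : ℕ} (L : (Fin n → ℝ) →ₗ[ℝ] ℝ) {g : ℝ → ℝ}
    (hg : ConvexOn ℝ Set.univ g) : ConvexOn ℝ Set.univ (fun α => g (L α)) := by
  refine ⟨convex_univ, fun x _ y _ a b ha hb hab => ?_⟩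
  have := hg.2 (Set.mem_univ (L x)) (Set.mem_univ (L y)) ha hb hab
  simpa [L.map_add, L.map_smul, smul_eq_mul] using this

private lemma convexOn_finset_sum {n : ℕ} {ι : Type*} (s : Finset ι)
    (f : ι → (Fin n → ℝ) → ℝ) (h : ∀ i ∈ s, ConvexOn ℝ Set.univ (f i)) :
    ConvexOn ℝ Set.univ (fun x => ∑ i ∈ s, f i x) := by
  classical
  induction s using Finset.induction_on with
  | empty => simpa using convexOn_const (0 : ℝ) convex_univ
  | insert _ _ hni ih =>
    rename_i a s'
    simp only [Finset.sum_insert hni]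
    exact (h a (Finset.mem_insert_self a s')).add
      (ih fun i hi => h i (Finset.mem_insert_of_mem hi))

private lemma quad_convex {n : ℕ} (K : Matrix (Fin n) (Fin n) ℝ) (hK : K.PosSemidef) :
    ConvexOn ℝ Set.univ (fun α => ∑ i, α i * (K.mulVec α) i) := by
  have hQ : ∀ x : Fin n → ℝ, 0 ≤ x ⬝ᵥ K.mulVec x := by
    intro x
    have := hK.re_dotProduct_nonneg x
    simpa using this
  refine ⟨convex_univ, fun x _ y _ a b ha hb hab => ?_⟩
  have key : ∀ u v : Fin n → ℝ, (∑ i, u i * (K.mulVec v) i) = u ⬝ᵥ K.mulVec v := fun u v => rfl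
  simp only [key]
  have expand : (a • x + b • y) ⬝ᵥ K.mulVec (a • x + b • y) =
      a * a * (x ⬝ᵥ K.mulVec x) + a * b * (x ⬝ᵥ K.mulVec y)
      + b * a * (y ⬝ᵥ K.mulVec x) + b * b * (y ⬝ᵥ K.mulVec y) := by
    simp [Matrix.mulVec_add, Matrix.mulVec_smul, dotProduct_add, add_dotProduct,
      smul_dotProduct, dotProduct_smul, smul_eq_mul]
    ring
  have hxy : 0 ≤ (x - y) ⬝ᵥ K.mulVec (x - y) := hQ (x - y)
  have expand2 : (x - y) ⬝ᵥ K.mulVec (x - y) =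
      (x ⬝ᵥ K.mulVec x) - (x ⬝ᵥ K.mulVec y) - (y ⬝ᵥ K.mulVec x) + (y ⬝ᵥ K.mulVec y) := by
    simp [Matrix.mulVec_sub, dotProduct_sub, sub_dotProduct]
    ring
  rw [expand, smul_eq_mul, smul_eq_mul]
  rw [expand2] at hxy
  have hb' : b = 1 - a := by linarith
  subst hb'
  nlinarith [mul_nonneg (mul_nonneg ha hb) hxy]

/-- The kernel logistic regression objective
`F(α) = (λ/2) αᵀKα − (1/n)(yᵀ ln p + (1−y)ᵀ ln(1−p))` is convex, where `K` is a
positive semidefinite kernel matrix, `λ ≥ 0`, the labels satisfy `y i ∈ {0, 1}`, and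
`p α i = (1 + exp (−(Kα) i))⁻¹`. -/
theorem klr_objective_convexOn (n : ℕ) (hn : 0 < n)
    (K : Matrix (Fin n) (Fin n) ℝ) (hK : K.PosSemidef)
    (lam : ℝ) (hlam : 0 ≤ lam)
    (y : Fin n → ℝ) (hy : ∀ i, y i = 0 ∨ y i = 1)
    (p : (Fin n → ℝ) → Fin n → ℝ)
    (hp : ∀ α i, p α i = (1 + Real.exp (-(K.mulVec α) i))⁻¹)
    (F : (Fin n → ℝ) → ℝ)
    (hF : ∀ α, F α = (lam / 2) * (∑ i, α i * (K.mulVec α) i) -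
      ((1 : ℝ) / n) * ∑ i, (y i * Real.log (p α i) + (1 - y i) * Real.log (1 - p α i))) :
    ConvexOn ℝ Set.univ F := by
  -- rewrite F as quadratic part plus (1/n) * sum of per-sample losses
  have hFeq : F = fun α => (lam / 2) * (∑ i, α i * (K.mulVec α) i) +
      ((1 : ℝ) / n) * ∑ i, -(y i * Real.log (p α i) + (1 - y i) * Real.log (1 - p α i)) := by
    funext α
    rw [hF α, Finset.sum_neg_distrib]
    ring
  rw [hFeq]
  have hterm : ∀ i, ConvexOn ℝ Set.univ
      (fun α => -(y i * Real.log (p α i) + (1 - y i) * Real.log (1 - p α i))) := by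
    intro i
    rcases hy i with h0 | h1
    · -- y i = 0 : term is -log(1 - p) = log (1 + exp z)
      have heq : (fun α => -(y i * Real.log (p α i) + (1 - y i) * Real.log (1 - p α i))) =
          fun α => Real.log (1 + Real.exp ((K.mulVec α) i)) := by
        funext α
        rw [hp α i, h0]
        have hz := (K.mulVec α) i
        have h1p : 1 - (1 + Real.exp (-(K.mulVec α) i))⁻¹ =
            (1 + Real.exp ((K.mulVec α) i))⁻¹ := by
          have he : Real.exp (-(K.mulVec α) i) = (Real.exp ((K.mulVec α) i))⁻¹ :=
            Real.exp_neg _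
          have hpos : (0:ℝ) < 1 + Real.exp ((K.mulVec α) i) := by positivity
          have hpos2 : (0:ℝ) < 1 + (Real.exp ((K.mulVec α) i))⁻¹ := by positivity
          rw [he]
          field_simp
          ring
        rw [h1p]
        simp [Real.log_inv]
      rw [heq]
      exact convexOn_comp_linear ((LinearMap.proj i).comp K.mulVecLin) logexp_convex
    · -- y i = 1 : term is -log p = log (1 + exp (-z))
      have heq : (fun α => -(y i * Real.log (p α i) + (1 - y i) * Real.log (1 - p α i))) =
          fun α => Real.log (1 + Real.exp ((-((LinearMap.proj i).comp K.mulVecLin)) α)) := by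
        funext α
        rw [hp α i, h1, Real.log_inv]
        simp [Matrix.mulVecLin]
      rw [heq]
      exact convexOn_comp_linear (-((LinearMap.proj i).comp K.mulVecLin)) logexp_convex
  have hsum : ConvexOn ℝ Set.univ
      (fun α => ∑ i, -(y i * Real.log (p α i) + (1 - y i) * Real.log (1 - p α i))) :=
    convexOn_finset_sum Finset.univ _ (fun i _ => hterm i)
  have h1 : ConvexOn ℝ Set.univ (fun α => (lam / 2) * (∑ i, α i * (K.mulVec α) i)) := by
    have := (quad_convex K hK).smul (c := lam / 2) (by linarith)
    simpa [smul_eq_mul] using this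
  have h2 : ConvexOn ℝ Set.univ (fun α => ((1 : ℝ) / n) *
      ∑ i, -(y i * Real.log (p α i) + (1 - y i) * Real.log (1 - p α i))) := by
    have := hsum.smul (c := (1 : ℝ) / n) (by positivity)
    simpa [smul_eq_mul] using this
  exact h1.add h2
end

section
/- Let n be a positive integer, K : Matrix (Fin n) (Fin n) ℝ a symmetric matrix (K.IsSymm), λ : ℝ, and y : Fin n → ℝ. Define p : (Fin n → ℝ) → Fin n → ℝ by p α i = (1 + Real.exp (−(K.mulVec α) i))⁻¹, and define F : EuclideanSpace ℝ (Fin n) → ℝ by F(α) = (λ/2) * (∑ i, α i * (K.mulVec α) i) − (1/n) * ∑ i, (y i * Real.log (p α i) + (1 − y i) * Real.log (1 − p α i)). Then at every α, F has gradient λ • K.mulVec α − (1/n) • K.mulVec (fun i => y i − p α i), i.e., HasGradientAt F (λ • K.mulVec α − (1/n) • K.mulVec (y − p α)) α. -/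
open Matrix

noncomputable def kprojCLM (n : ℕ) (K : Matrix (Fin n) (Fin n) ℝ) (i : Fin n) :
    EuclideanSpace ℝ (Fin n) →L[ℝ] ℝ :=
  ∑ j, K i j • EuclideanSpace.proj j

lemma kprojCLM_apply (n : ℕ) (K : Matrix (Fin n) (Fin n) ℝ) (i : Fin n)
    (v : EuclideanSpace ℝ (Fin n)) :
    kprojCLM n K i v = (K.mulVec v) i := by
  simp [kprojCLM, Matrix.mulVec, dotProduct]

lemma phi_hasDerivAt (c s : ℝ) :
    HasDerivAt (fun t : ℝ => c * Real.log ((1 + Real.exp (-t))⁻¹)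
      + (1 - c) * Real.log (1 - (1 + Real.exp (-t))⁻¹))
      (c - (1 + Real.exp (-s))⁻¹) s := by
  have hE : 0 < Real.exp (-s) := Real.exp_pos _
  have hD : (0:ℝ) < 1 + Real.exp (-s) := by linarith
  have hD0 : (1:ℝ) + Real.exp (-s) ≠ 0 := ne_of_gt hD
  have h1 : HasDerivAt (fun t : ℝ => 1 + Real.exp (-t)) (-Real.exp (-s)) s := by
    have := ((Real.hasDerivAt_exp (-s)).comp s (hasDerivAt_neg s)).const_add (1:ℝ)
    simpa using this
  have hσ : HasDerivAt (fun t : ℝ => (1 + Real.exp (-t))⁻¹)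
      (Real.exp (-s) / (1 + Real.exp (-s))^2) s := by
    have := h1.inv hD0
    simp only [neg_div, neg_neg] at this; exact this
  have hσ0 : ((1:ℝ) + Real.exp (-s))⁻¹ ≠ 0 := inv_ne_zero hD0
  have h1mσ : (1:ℝ) - (1 + Real.exp (-s))⁻¹ = Real.exp (-s) / (1 + Real.exp (-s)) := by
    field_simp
    ring
  have h1mσ0 : (1:ℝ) - (1 + Real.exp (-s))⁻¹ ≠ 0 := by
    rw [h1mσ]; positivity
  have hlog1 : HasDerivAt (fun t : ℝ => Real.log ((1 + Real.exp (-t))⁻¹))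
      (Real.exp (-s) / (1 + Real.exp (-s))^2 / (1 + Real.exp (-s))⁻¹) s := hσ.log hσ0
  have hsub : HasDerivAt (fun t : ℝ => 1 - (1 + Real.exp (-t))⁻¹)
      (-(Real.exp (-s) / (1 + Real.exp (-s))^2)) s := hσ.const_sub 1
  have hlog2 : HasDerivAt (fun t : ℝ => Real.log (1 - (1 + Real.exp (-t))⁻¹))
      (-(Real.exp (-s) / (1 + Real.exp (-s))^2) / (1 - (1 + Real.exp (-s))⁻¹)) s :=
    hsub.log h1mσ0
  have := (hlog1.const_mul c).add (hlog2.const_mul (1 - c))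
  refine this.congr_deriv ?_
  rw [h1mσ]
  field_simp
  ring

lemma symm_dot (n : ℕ) (K : Matrix (Fin n) (Fin n) ℝ) (hK : K.IsSymm)
    (w v : Fin n → ℝ) :
    ∑ i, w i * (K.mulVec v) i = ∑ i, (K.mulVec w) i * v i := by
  simp only [Matrix.mulVec, dotProduct, Finset.mul_sum, Finset.sum_mul]
  rw [Finset.sum_comm]
  refine Finset.sum_congr rfl fun j _ => Finset.sum_congr rfl fun i _ => ?_
  rw [hK.apply i j]
  ring

/-- Gradient formula for the kernel logistic regression objective:
`∇F(α) = λKα − (1/n) K (y − p(α))`. -/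
theorem klr_gradient (n : ℕ) (hn : 0 < n)
    (K : Matrix (Fin n) (Fin n) ℝ) (hK : K.IsSymm)
    (lam : ℝ) (y : Fin n → ℝ)
    (p : (Fin n → ℝ) → Fin n → ℝ)
    (hp : ∀ α i, p α i = (1 + Real.exp (-(K.mulVec α) i))⁻¹)
    (F : EuclideanSpace ℝ (Fin n) → ℝ)
    (hF : ∀ α, F α = (lam / 2) * (∑ i, α i * (K.mulVec α) i) -
      ((1 : ℝ) / n) * ∑ i, (y i * Real.log (p α i) + (1 - y i) * Real.log (1 - p α i))) :
    ∀ α : EuclideanSpace ℝ (Fin n),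
      HasGradientAt F
        (WithLp.toLp 2 (lam • K.mulVec α - ((1 : ℝ) / n) • K.mulVec (fun i => y i - p α i))) α := by
  intro α
  have hFeq : F = fun a : EuclideanSpace ℝ (Fin n) =>
      (lam / 2) * (∑ i, a i * (K.mulVec a) i)
        - ((1:ℝ)/n) * ∑ i, (y i * Real.log ((1 + Real.exp (-(K.mulVec a) i))⁻¹)
          + (1 - y i) * Real.log (1 - (1 + Real.exp (-(K.mulVec a) i))⁻¹)) := by
    funext a
    rw [hF a]
    simp only [hp]
  rw [hasGradientAt_iff_hasFDerivAt, hFeq]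
  -- linear parts
  have hmv : ∀ i, HasFDerivAt (fun a : EuclideanSpace ℝ (Fin n) => (K.mulVec a) i)
      (kprojCLM n K i) α := by
    intro i
    have hfun : (fun a : EuclideanSpace ℝ (Fin n) => (K.mulVec a) i) = ⇑(kprojCLM n K i) :=
      funext fun v => (kprojCLM_apply n K i v).symm
    rw [hfun]
    exact (kprojCLM n K i).hasFDerivAt
  have hcoord : ∀ i, HasFDerivAt (fun a : EuclideanSpace ℝ (Fin n) => a i)
      (EuclideanSpace.proj i (𝕜 := ℝ)) α := by
    intro i
    have hfun : (fun a : EuclideanSpace ℝ (Fin n) => a i)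
        = ⇑(EuclideanSpace.proj i (𝕜 := ℝ)) :=
      funext fun a => rfl
    rw [hfun]
    exact (EuclideanSpace.proj (𝕜 := ℝ) (ι := Fin n) i).hasFDerivAt
  -- quadratic part
  have h1 : HasFDerivAt (fun a : EuclideanSpace ℝ (Fin n) => ∑ i, a i * (K.mulVec a) i)
      (∑ i, (α i • kprojCLM n K i + (K.mulVec α) i • (EuclideanSpace.proj i : EuclideanSpace ℝ (Fin n) →L[ℝ] ℝ))) α :=
    HasFDerivAt.fun_sum fun i _ => (hcoord i).mul (hmv i)
  -- loss part
  have h2 : HasFDerivAt (fun a : EuclideanSpace ℝ (Fin n) =>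
      ∑ i, (y i * Real.log ((1 + Real.exp (-(K.mulVec a) i))⁻¹)
        + (1 - y i) * Real.log (1 - (1 + Real.exp (-(K.mulVec a) i))⁻¹)))
      (∑ i, (y i - (1 + Real.exp (-(K.mulVec α) i))⁻¹) • kprojCLM n K i) α := by
    refine HasFDerivAt.fun_sum fun i _ => ?_
    exact (phi_hasDerivAt (y i) ((K.mulVec α) i)).comp_hasFDerivAt α (hmv i)
  have hTot := (h1.const_mul (lam/2)).sub (h2.const_mul ((1:ℝ)/n))
  refine hTot.congr_fderiv ?_
  apply ContinuousLinearMap.ext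
  intro v
  simp only [ContinuousLinearMap.coe_sub', Pi.sub_apply, ContinuousLinearMap.coe_smul',
    Pi.smul_apply, ContinuousLinearMap.coe_sum', Finset.sum_apply,
    ContinuousLinearMap.add_apply, ContinuousLinearMap.smul_apply, kprojCLM_apply,
    PiLp.proj_apply, smul_eq_mul, InnerProductSpace.toDual_apply_apply, WithLp.ofLp_toLp,
    PiLp.inner_apply, RCLike.inner_apply, starRingEnd_apply, star_trivial]
  have hA : ∑ i, α i * (K.mulVec v) i = ∑ i, (K.mulVec α) i * v i :=
    symm_dot n K hK α v
  have hB : ∑ i, (y i - p α i) * (K.mulVec v) i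
      = ∑ i, (K.mulVec (fun i => y i - p α i)) i * v i :=
    symm_dot n K hK (fun i => y i - p α i) v
  have hg : ∀ i, (lam • K.mulVec α - ((1:ℝ)/n) • K.mulVec (fun i => y i - p α i)) i
      = lam * (K.mulVec α) i - ((1:ℝ)/n) * (K.mulVec (fun i => y i - p α i)) i := by
    intro i; rfl
  calc (lam/2) * (∑ i, (α i * (K.mulVec v) i + (K.mulVec α) i * v i))
        - ((1:ℝ)/n) * ∑ i, (y i - (1 + Real.exp (-(K.mulVec α) i))⁻¹) * (K.mulVec v) i
      = (lam/2) * (∑ i, (K.mulVec α) i * v i + ∑ i, (K.mulVec α) i * v i)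
        - ((1:ℝ)/n) * ∑ i, (K.mulVec (fun i => y i - p α i)) i * v i := by
        rw [Finset.sum_add_distrib, hA]
        congr 2
        rw [← hB]
        refine Finset.sum_congr rfl fun i _ => ?_
        rw [hp]
    _ = ∑ i, (lam • K.mulVec α - ((1:ℝ)/n) • K.mulVec (fun i => y i - p α i)) i * v i := by
        simp only [hg, sub_mul, Finset.sum_sub_distrib]
        congr 1
        · rw [show (∑ i, lam * (K.mulVec α) i * v i) = lam * ∑ i, (K.mulVec α) i * v i by
            rw [Finset.mul_sum]; exact Finset.sum_congr rfl fun i _ => (mul_assoc _ _ _)]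
          ring
        · rw [Finset.mul_sum]
          exact Finset.sum_congr rfl fun i _ => (mul_assoc _ _ _).symm
      _ = ∑ i, v i * (lam * (K.mulVec α) i - ((1:ℝ)/n) * (K.mulVec (fun i => y i - p α i)) i) :=
          Finset.sum_congr rfl fun i _ => by rw [hg]; ring
  done
end

section
/- Let n be a positive integer, K : Matrix (Fin n) (Fin n) ℝ a symmetric matrix (K.IsSymm), λ : ℝ, and y : Fin n → ℝ. Define p : (Fin n → ℝ) → Fin n → ℝ by p α i = (1 + Real.exp (−(K.mulVec α) i))⁻¹, and define the gradient map g : (Fin n → ℝ) → (Fin n → ℝ) by g(α) = λ • K.mulVec α − (1/n) • K.mulVec (fun i => y i − p α i). Then at every α, g is Fréchet differentiable with derivative given by the Hessian matrix ∇²F(α) = (1/n) • (Kᵀ * Matrix.diagonal (fun i => p α i * (1 − p α i)) * K) + λ • K; that is, HasFDerivAt g (Matrix.toLin' ((1/n) • (Kᵀ * Matrix.diagonal (fun i => p α i * (1 − p α i)) * K) + λ • K)) α. -/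
open Matrix

lemma logistic_hasDerivAt (t : ℝ) :
    HasDerivAt (fun t : ℝ => (1 + Real.exp (-t))⁻¹)
      ((1 + Real.exp (-t))⁻¹ * (1 - (1 + Real.exp (-t))⁻¹)) t := by
  have he : (0:ℝ) < 1 + Real.exp (-t) := by positivity
  have h1 : HasDerivAt (fun t : ℝ => 1 + Real.exp (-t)) (-Real.exp (-t)) t := by
    simpa using ((Real.hasDerivAt_exp (-t)).comp t (hasDerivAt_neg t)).const_add 1
  have h2 := h1.inv he.ne'
  refine h2.congr_deriv ?_
  field_simp
  ring

lemma sigm_pi_hasFDerivAt (n : ℕ) (v : Fin n → ℝ) :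
    HasFDerivAt (fun w : Fin n → ℝ => fun i => (1 + Real.exp (-(w i)))⁻¹)
      (LinearMap.toContinuousLinearMap (Matrix.toLin'
        (Matrix.diagonal (fun i => (1 + Real.exp (-(v i)))⁻¹ * (1 - (1 + Real.exp (-(v i)))⁻¹))))) v := by
  rw [hasFDerivAt_pi']
  intro i
  have h := ((logistic_hasDerivAt (v i)).hasFDerivAt).comp v
    (ContinuousLinearMap.proj (R := ℝ) (φ := fun _ : Fin n => ℝ) i).hasFDerivAt
  refine h.congr_fderiv ?_
  ext w
  simp [Matrix.mulVec_diagonal, mul_comm]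

/-- Hessian formula for kernel logistic regression: the gradient map
`g(α) = λKα − (1/n) K (y − p(α))` has Fréchet derivative
`∇²F(α) = (1/n) Kᵀ diag(p(α) ⊙ (1 − p(α))) K + λK` at every `α`. -/
theorem klr_hessian (n : ℕ) (hn : 0 < n)
    (K : Matrix (Fin n) (Fin n) ℝ) (hK : K.IsSymm)
    (lam : ℝ) (y : Fin n → ℝ)
    (p : (Fin n → ℝ) → Fin n → ℝ)
    (hp : ∀ α i, p α i = (1 + Real.exp (-(K.mulVec α) i))⁻¹)
    (g : (Fin n → ℝ) → (Fin n → ℝ))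
    (hg : ∀ α, g α = lam • K.mulVec α - ((1 : ℝ) / n) • K.mulVec (fun i => y i - p α i)) :
    ∀ α : Fin n → ℝ,
      HasFDerivAt g
        (LinearMap.toContinuousLinearMap
          (Matrix.toLin'
            (((1 : ℝ) / n) • (Kᵀ * Matrix.diagonal (fun i => p α i * (1 - p α i)) * K) +
              lam • K))) α := by
  intro α
  set Lc : (Fin n → ℝ) →L[ℝ] (Fin n → ℝ) :=
    LinearMap.toContinuousLinearMap (Matrix.toLin' K) with hLc
  have hLapp : ∀ v, Lc v = K.mulVec v := fun v => by simp [hLc]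
  set Dc : (Fin n → ℝ) →L[ℝ] (Fin n → ℝ) :=
    LinearMap.toContinuousLinearMap (Matrix.toLin'
      (Matrix.diagonal (fun i =>
        (1 + Real.exp (-((K.mulVec α) i)))⁻¹ * (1 - (1 + Real.exp (-((K.mulVec α) i)))⁻¹)))) with hDc
  -- derivative of α ↦ K.mulVec α
  have h1 : HasFDerivAt (fun β : Fin n → ℝ => K.mulVec β) Lc α := by
    simpa [funext hLapp] using Lc.hasFDerivAt (x := α)
  -- derivative of p
  have hS : HasFDerivAt (fun β => p β) (Dc.comp Lc) α := by
    have := (sigm_pi_hasFDerivAt n (K.mulVec α)).comp α h1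
    suffices hf : (fun β => p β) = (fun w i => (1 + Real.exp (-(w i)))⁻¹) ∘ K.mulVec by
      rw [hf]; exact this
    funext β
    funext i
    simp [hp]
  have hInner : HasFDerivAt (fun β => fun i => y i - p β i) (-(Dc.comp Lc)) α := by
    exact HasFDerivAt.const_sub hS y
  have hKInner : HasFDerivAt (fun β => K.mulVec (fun i => y i - p β i))
      (Lc.comp (-(Dc.comp Lc))) α := by
    have := Lc.hasFDerivAt.comp α hInner
    simpa [funext hLapp] using this
  have hTot := (h1.const_smul lam).sub (hKInner.const_smul ((1 : ℝ) / n))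
  have hgfun : g = fun β => lam • K.mulVec β - ((1 : ℝ) / n) • K.mulVec (fun i => y i - p β i) :=
    funext hg
  rw [hgfun]
  refine hTot.congr_fderiv ?_
  ext v i
  have hKT : Kᵀ = K := hK
  simp [hp, hKT, hDc, Matrix.toLin'_apply, ← Matrix.mulVec_mulVec, Matrix.add_mulVec,
    Matrix.smul_mulVec, Matrix.mulVec_diagonal, smul_sub, hLapp]
  ring
end
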